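/- Let X' = (t',x') ∈ Q, and let R > 0 and 0 < t̄ < t' be such that the closure of B_t̄(X',R) is contained in Q and u(t,x) = min over y ∈ Ω of [(t − t̄) L((x − y)/(t − t̄)) + u(t̄, y)] for each (t,x) ∈ B_t̄(X',R). If (t,x) ∈ B_t̄(X',R) is a point of differentiability of u and y ∈ Ω attains the minimum, i.e. u(t,x) = (t − t̄) L((x − y)/(t − t̄)) + u(t̄, y), then Du(t,x) = ( −L((x−y)/(t−t̄)) , (1/(t−t̄)) ∇L(x−y) ) and Dv_t̄(t,x) = ( u(t̄,y) , ∇L(x−y) ), where ∇L(q) = A⁻¹q. -/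

import Mathlib

/-!
Fix the minimiser `y` and put `g(s, z) = (s - t̄) L((z - y)/(s - t̄)) + u(t̄, y)`. The
representation formula gives `u ≤ g` on the open set `B_t̄(X', R)`, with equality at `(t, x)`,
so the differentiable function `u - g` has a local maximum there and `Du(t, x) = Dg(t, x)`.
Since `L` is quadratic, `s L(q / s) = L(q) / s`, whose gradient is `(-L(q / s), A⁻¹ q / s)`.
The product rule and `u(t, x) = g(t, x)` then give `Dv_t̄(t, x)`.
-/

open scoped RealInnerProductSpace
open Filter Topology Set Metric

noncomputable section

/-- The Lagrangian `L(q) = ½ ⟨A⁻¹ q, q⟩`. -/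
def Lag {n : ℕ} (A : Matrix (Fin n) (Fin n) ℝ) (q : EuclideanSpace ℝ (Fin n)) : ℝ :=
  (1 / 2) * ⟪Matrix.toEuclideanLin A⁻¹ q, q⟫

/-- The Hamiltonian `H(p) = ½ ⟨A p, p⟩`. -/
def Ham {n : ℕ} (A : Matrix (Fin n) (Fin n) ℝ) (p : EuclideanSpace ℝ (Fin n)) : ℝ :=
  (1 / 2) * ⟪Matrix.toEuclideanLin A p, p⟫

/-- Euclidean norm on `ℝ × ℝⁿ`. -/
def pnorm {n : ℕ} (V : ℝ × EuclideanSpace ℝ (Fin n)) : ℝ :=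
  Real.sqrt (V.1 ^ 2 + ‖V.2‖ ^ 2)

/-- Euclidean pairing on `ℝ × ℝⁿ`. -/
def pairR {n : ℕ} (P V : ℝ × EuclideanSpace ℝ (Fin n)) : ℝ :=
  P.1 * V.1 + ⟪P.2, V.2⟫

/-- Open Euclidean ball in `ℝ × ℝⁿ`. -/
def pball {n : ℕ} (X : ℝ × EuclideanSpace ℝ (Fin n)) (R : ℝ) :
    Set (ℝ × EuclideanSpace ℝ (Fin n)) :=
  {Y | pnorm (Y - X) < R}

/-- `B_t̄(X,R) = ((t̄,∞) × ℝⁿ) ∩ B(X,R)`. -/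
def tball {n : ℕ} (tbar : ℝ) (X : ℝ × EuclideanSpace ℝ (Fin n)) (R : ℝ) :
    Set (ℝ × EuclideanSpace ℝ (Fin n)) :=
  {Y | tbar < Y.1} ∩ pball X R

/-- Superdifferential of `w` at `X`:
`P ∈ D⁺w(X)` iff `limsup_{Y→X} (w(Y)−w(X)−⟨P,Y−X⟩)/|Y−X| ≤ 0`. -/
def superDiff {n : ℕ} (w : ℝ × EuclideanSpace ℝ (Fin n) → ℝ)
    (X P : ℝ × EuclideanSpace ℝ (Fin n)) : Prop :=
  ∀ ε > 0, ∀ᶠ Y in 𝓝[≠] X, w Y - w X - pairR P (Y - X) ≤ ε * pnorm (Y - X)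

/-- The continuous linear functional on `ℝ × ℝⁿ` represented by the vector `P`. -/
noncomputable def pairCLM {n : ℕ} (P : ℝ × EuclideanSpace ℝ (Fin n)) :
    (ℝ × EuclideanSpace ℝ (Fin n)) →L[ℝ] ℝ :=
  P.1 • ContinuousLinearMap.fst ℝ ℝ (EuclideanSpace ℝ (Fin n)) +
    (innerSL ℝ P.2).comp (ContinuousLinearMap.snd ℝ ℝ (EuclideanSpace ℝ (Fin n)))

variable {n : ℕ}

@[simp]
theorem pairCLM_apply (P V : ℝ × EuclideanSpace ℝ (Fin n)) :
    pairCLM P V = P.1 * V.1 + ⟪P.2, V.2⟫ := rfl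

theorem continuous_pnorm : Continuous (pnorm (n := n)) := by
  unfold pnorm
  fun_prop

theorem isOpen_tball (tbar : ℝ) (X : ℝ × EuclideanSpace ℝ (Fin n)) (R : ℝ) :
    IsOpen (tball tbar X R) :=
  (isOpen_lt continuous_const continuous_fst).inter <|
    isOpen_lt (continuous_pnorm.comp (continuous_id.sub continuous_const)) continuous_const

theorem HasFDerivAt.eq_of_eventuallyLE_of_eq {E : Type*} [NormedAddCommGroup E]
    [NormedSpace ℝ E] {u g : E → ℝ} {f f' : E →L[ℝ] ℝ} {a : E} (hu : HasFDerivAt u f a)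
    (hg : HasFDerivAt g f' a) (hle : u ≤ᶠ[𝓝 a] g) (heq : u a = g a) : f = f' := by
  have hmax : IsLocalMax (fun X => u X - g X) a := by
    filter_upwards [hle] with X hX
    linarith
  exact sub_eq_zero.mp (hmax.hasFDerivAt_eq_zero (hu.sub hg))

theorem Lag_smul (A : Matrix (Fin n) (Fin n) ℝ) (c : ℝ) (q : EuclideanSpace ℝ (Fin n)) :
    Lag A (c • q) = c ^ 2 * Lag A q := by
  simp only [Lag, map_smul, real_inner_smul_left, real_inner_smul_right]
  ring

theorem hasFDerivAt_Lag {A : Matrix (Fin n) (Fin n) ℝ} (hA : A.IsHermitian)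
    (q : EuclideanSpace ℝ (Fin n)) :
    HasFDerivAt (Lag A) (innerSL ℝ (Matrix.toEuclideanLin A⁻¹ q)) q := by
  set T := LinearMap.toContinuousLinearMap (Matrix.toEuclideanLin A⁻¹)
  have hT : (Matrix.toEuclideanLin A⁻¹).IsSymmetric :=
    Matrix.isSymmetric_toEuclideanLin_iff.mpr hA.inv
  have hquad := (T.hasFDerivAt.inner ℝ (hasFDerivAt_id q)).const_mul (1 / 2 : ℝ)
  refine hquad.congr_fderiv (ContinuousLinearMap.ext fun v => ?_)
  have hsymm : ⟪T v, q⟫ = ⟪T q, v⟫ :=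
    (hT v q).trans (real_inner_comm _ _)
  simp only [smul_apply, ContinuousLinearMap.comp_apply,
    ContinuousLinearMap.prod_apply, fderivInnerCLM_apply, innerSL_apply_apply, id, smul_eq_mul]
  change _ = ⟪T q, v⟫
  rw [ContinuousLinearMap.id_apply, hsymm]
  ring

theorem hasFDerivAt_mul_Lag_inv_smul {A : Matrix (Fin n) (Fin n) ℝ} (hA : A.IsHermitian)
    {s : ℝ} (hs : s ≠ 0) (z : EuclideanSpace ℝ (Fin n)) :
    HasFDerivAt (fun X : ℝ × EuclideanSpace ℝ (Fin n) => X.1 * Lag A (X.1⁻¹ • X.2))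
      (pairCLM (-Lag A (s⁻¹ • z), s⁻¹ • Matrix.toEuclideanLin A⁻¹ z)) (s, z) := by
  have hloc : (fun X : ℝ × EuclideanSpace ℝ (Fin n) => X.1⁻¹ * Lag A X.2) =ᶠ[𝓝 (s, z)]
      fun X => X.1 * Lag A (X.1⁻¹ • X.2) := by
    filter_upwards [continuous_fst.continuousAt.eventually_ne hs] with X hX
    rw [Lag_smul]
    field_simp
  have hfst : HasFDerivAt (Prod.fst : ℝ × EuclideanSpace ℝ (Fin n) → ℝ)
      (ContinuousLinearMap.fst ℝ ℝ _) (s, z) := hasFDerivAt_fst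
  have hinv := (hasDerivAt_inv hs).comp_hasFDerivAt (s, z) hfst
  have hLag := (hasFDerivAt_Lag hA z).comp (f := Prod.snd) (s, z) hasFDerivAt_snd
  have hquot := hinv.mul hLag
  refine (hquot.congr_of_eventuallyEq hloc.symm).congr_fderiv (ContinuousLinearMap.ext fun V => ?_)
  simp only [Function.comp_apply, add_apply, smul_apply, ContinuousLinearMap.comp_apply,
    innerSL_apply_apply, ContinuousLinearMap.coe_fst', ContinuousLinearMap.coe_snd',
    pairCLM_apply, Lag_smul, real_inner_smul_left, smul_eq_mul]
  ring

end

theorem statement7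
    {n : ℕ}
    (Ω : Set (EuclideanSpace ℝ (Fin n)))
    (A : Matrix (Fin n) (Fin n) ℝ) (hA : A.PosDef)
    (u : ℝ × EuclideanSpace ℝ (Fin n) → ℝ)
    (t' : ℝ) (x' : EuclideanSpace ℝ (Fin n))
    (R : ℝ) (tbar : ℝ)
    (hmin : ∀ X ∈ tball tbar (t', x') R,
      IsLeast {v | ∃ y ∈ Ω,
        v = (X.1 - tbar) * Lag A ((X.1 - tbar)⁻¹ • (X.2 - y)) + u (tbar, y)} (u X))
    (t : ℝ) (x : EuclideanSpace ℝ (Fin n)) (htx : (t, x) ∈ tball tbar (t', x') R)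
    (y : EuclideanSpace ℝ (Fin n)) (hy : y ∈ Ω)
    (hymin : u (t, x) = (t - tbar) * Lag A ((t - tbar)⁻¹ • (x - y)) + u (tbar, y))
    (f : (ℝ × EuclideanSpace ℝ (Fin n)) →L[ℝ] ℝ)
    (hf : HasFDerivAt u f (t, x)) :
    f = pairCLM (-Lag A ((t - tbar)⁻¹ • (x - y)),
        (t - tbar)⁻¹ • Matrix.toEuclideanLin A⁻¹ (x - y)) ∧
    HasFDerivAt (fun X : ℝ × EuclideanSpace ℝ (Fin n) => (X.1 - tbar) * u X)
      (pairCLM (u (tbar, y), Matrix.toEuclideanLin A⁻¹ (x - y))) (t, x) := by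
  have hs : t - tbar ≠ 0 := (sub_pos.2 htx.1).ne'
  have hg : HasFDerivAt
      (fun X => (X.1 - tbar) * Lag A ((X.1 - tbar)⁻¹ • (X.2 - y)) + u (tbar, y))
      (pairCLM (-Lag A ((t - tbar)⁻¹ • (x - y)),
        (t - tbar)⁻¹ • Matrix.toEuclideanLin A⁻¹ (x - y))) (t, x) :=
    ((hasFDerivAt_comp_sub (f := fun X : ℝ × EuclideanSpace ℝ (Fin n) =>
      X.1 * Lag A (X.1⁻¹ • X.2)) (tbar, y)).2
        (hasFDerivAt_mul_Lag_inv_smul hA.1 hs (x - y))).add_const _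
  have hle : u ≤ᶠ[𝓝 (t, x)]
      fun X => (X.1 - tbar) * Lag A ((X.1 - tbar)⁻¹ • (X.2 - y)) + u (tbar, y) := by
    filter_upwards [(isOpen_tball tbar (t', x') R).mem_nhds htx] with X hX
    exact (hmin X hX).2 ⟨y, hy, rfl⟩
  have hfP := hf.eq_of_eventuallyLE_of_eq hg hle hymin
  refine ⟨hfP, ((hasFDerivAt_fst.sub_const tbar).mul hf).congr_fderiv ?_⟩
  refine ContinuousLinearMap.ext fun V => ?_
  simp only [hfP, hymin, add_apply, smul_apply, ContinuousLinearMap.coe_fst', pairCLM_apply,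
    real_inner_smul_left, smul_eq_mul]
  field_simp
  ring
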